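/- Let k ≥ 1, let G be a finite connected simple graph that is (P3+kP2)-free and contains a vertex set A inducing P3+(k-1)P2, and assume that every minimum dominating set of G is a stable set. Let D be a minimum dominating set of G and let c, c' ∈ C ∩ D be two distinct vertices such that the open neighbourhood of c and the open neighbourhood of c' are both cliques. Then d(c, c') ≠ 3. -/
import Mathlib


open SimpleGraph

/-- The disjoint union of a path `P₃` and `k` copies of `P₂`. -/
def P3kP2 (k : ℕ) : SimpleGraph (Fin 3 ⊕ Fin k × Fin 2) :=
  SimpleGraph.fromRel fun x y =>
    match x, y with
    | Sum.inl a, Sum.inl b => (b : ℕ) = (a : ℕ) + 1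
    | Sum.inr a, Sum.inr b => a.1 = b.1 ∧ a.2 ≠ b.2
    | _, _ => False

/-- `G` contains no induced subgraph isomorphic to `H`. -/
def HFree {V W : Type*} (G : SimpleGraph V) (H : SimpleGraph W) : Prop :=
  IsEmpty (H ↪g G)

/-- `D` is a dominating set of `G`. -/
def IsDomSet {V : Type*} (G : SimpleGraph V) (D : Set V) : Prop :=
  ∀ v ∉ D, ∃ u ∈ D, G.Adj u v

/-- `D` is a minimum dominating set of `G`. -/
def IsMinDomSet {V : Type*} (G : SimpleGraph V) (D : Set V) : Prop :=
  IsDomSet G D ∧ ∀ D' : Set V, IsDomSet G D' → D.ncard ≤ D'.ncard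

/-- The distance from a vertex `v` to a set `A` of vertices. -/
noncomputable def distToSet {V : Type*} (G : SimpleGraph V) (v : V) (A : Set V) : ℕ :=
  sInf ((G.dist v) '' A)

/-- The set of vertices at distance two from `A` whose open neighbourhood is a clique. -/
def cliqueDistTwo {V : Type*} (G : SimpleGraph V) (A : Set V) : Set V :=
  {v | distToSet G v A = 2 ∧ G.IsClique (G.neighborSet v)}

/-- A vertex `c₁` is regular (w.r.t. `A` and `k`) if `c₁ ∈ 𝒞` and there are `k` further
vertices of `𝒞` such that all `k+1` of them are pairwise at distance at least four. -/
def IsRegularVertex {V : Type*} (G : SimpleGraph V) (k : ℕ) (A : Set V) (c₁ : V) : Prop :=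
  c₁ ∈ cliqueDistTwo G A ∧ ∃ c : Fin k → V, (∀ i, c i ∈ cliqueDistTwo G A) ∧
    (∀ i, 4 ≤ G.dist c₁ (c i)) ∧ ∀ i j, i ≠ j → 4 ≤ G.dist (c i) (c j)

/-- `v` is a private neighbour of `u` with respect to the dominating set `D`:
`N[v] ∩ D = {u}`. -/
def IsPrivateNbr {V : Type*} (G : SimpleGraph V) (D : Set V) (u v : V) : Prop :=
  (insert v (G.neighborSet v)) ∩ D = {u}

/-- A stable (independent) set of vertices. -/
def IsStable {V : Type*} (G : SimpleGraph V) (S : Set V) : Prop :=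
  S.Pairwise fun u v => ¬ G.Adj u v

theorem stmt16
    {V : Type*} [Fintype V] (k : ℕ) (hk : 1 ≤ k) (G : SimpleGraph V)
    (hconn : G.Connected) (hfree : HFree G (P3kP2 k))
    (A : Set V) (hA : ∃ f : P3kP2 (k-1) ↪g G, Set.range f = A)
    (B C : Set V) (hB : B = {v | distToSet G v A = 1})
    (hC : C = {v | distToSet G v A = 2})
    (hstable : ∀ D : Set V, IsMinDomSet G D → IsStable G D)
    (D : Set V) (hD : IsMinDomSet G D)
    (c c' : V) (hc : c ∈ C ∩ D) (hc' : c' ∈ C ∩ D) (hne : c ≠ c')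
    (hcl : G.IsClique (G.neighborSet c)) (hcl' : G.IsClique (G.neighborSet c')) :
    G.dist c c' ≠ 3 := by
  intro h3
  -- extract a shortest walk of length 3
  obtain ⟨p, hp⟩ := (hconn c c').exists_walk_length_eq_dist
  rw [h3] at hp
  set x := p.getVert 1 with hxdef
  set y := p.getVert 2 with hydef
  have hx : G.Adj c x := by
    have := p.adj_getVert_succ (i := 0) (by omega)
    simpa [p.getVert_zero] using this
  have hxy : G.Adj x y := p.adj_getVert_succ (i := 1) (by omega)
  have hyc' : G.Adj y c' := by
    have := p.adj_getVert_succ (i := 2) (by omega)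
    have h2 : p.getVert 3 = c' := by rw [← hp]; exact p.getVert_length
    rwa [h2] at this
  have hnxc' : ¬ G.Adj x c' := by
    intro h
    have := G.dist_le (Walk.cons hx (Walk.cons h Walk.nil))
    simp [h3] at this
  have hncy : ¬ G.Adj c y := by
    intro h
    have := G.dist_le (Walk.cons h (Walk.cons hyc' Walk.nil))
    simp [h3] at this
  have hncc' : ¬ G.Adj c c' := by
    intro h
    have := G.dist_le (Walk.cons h Walk.nil)
    simp [h3] at this
  set D' : Set V := insert x (insert y (D \ {c, c'})) with hD'def
  have hxD' : x ∈ D' := Set.mem_insert _ _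
  have hyD' : y ∈ D' := Set.mem_insert_of_mem _ (Set.mem_insert _ _)
  have hsub : D \ {c, c'} ⊆ D' := fun v hv =>
    Set.mem_insert_of_mem _ (Set.mem_insert_of_mem _ hv)
  have hdom : IsDomSet G D' := by
    intro v hv
    by_cases hvD : v ∈ D
    · have : v = c ∨ v = c' := by
        by_contra hcon
        push_neg at hcon
        exact hv (hsub ⟨hvD, by simp [hcon.1, hcon.2]⟩)
      rcases this with rfl | rfl
      · exact ⟨x, hxD', hx.symm⟩
      · exact ⟨y, hyD', hyc'⟩
    · obtain ⟨u, huD, huv⟩ := hD.1 v hvD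
      by_cases huc : u = c
      · subst huc
        have hvne : v ≠ x := fun h => hv (h ▸ hxD')
        have : G.Adj x v := hcl (G.mem_neighborSet _ _ |>.2 hx) (G.mem_neighborSet _ _ |>.2 huv) (Ne.symm hvne)
        exact ⟨x, hxD', this⟩
      · by_cases huc' : u = c'
        · subst huc'
          have hvne : v ≠ y := fun h => hv (h ▸ hyD')
          have : G.Adj y v := hcl' (G.mem_neighborSet _ _ |>.2 hyc'.symm) (G.mem_neighborSet _ _ |>.2 huv) (Ne.symm hvne)
          exact ⟨y, hyD', this⟩
        · exact ⟨u, hsub ⟨huD, by simp [huc, huc']⟩, huv⟩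
  have hpairsub : ({c, c'} : Set V) ⊆ D := by
    intro v hv
    rcases hv with rfl | rfl
    · exact hc.2
    · exact hc'.2
  have hpair : ({c, c'} : Set V).ncard = 2 := Set.ncard_pair hne
  have h2le : 2 ≤ D.ncard := by
    have := Set.ncard_le_ncard hpairsub D.toFinite
    omega
  have hdiff : (D \ {c, c'}).ncard = D.ncard - 2 := by
    rw [Set.ncard_diff hpairsub, hpair]
  have hle : D'.ncard ≤ D.ncard := by
    have h1 := Set.ncard_insert_le x (insert y (D \ {c, c'}))
    have h2 := Set.ncard_insert_le y (D \ {c, c'})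
    rw [hdiff] at h2
    rw [hD'def]
    omega
  have hge : D.ncard ≤ D'.ncard := hD.2 D' hdom
  have hmin : IsMinDomSet G D' := ⟨hdom, fun D'' hD'' => le_trans hle (hD.2 D'' hD'')⟩
  exact (hstable D' hmin hxD' hyD' hxy.ne) hxy
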